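/- Let τ' be a complex number with positive imaginary part and Λ' = {m + n·τ' : m, n ∈ ℤ} the associated lattice. Entire functions f₁₁, f₁₂, f₂₁, f₂₂, g₁₁, g₁₂, g₂₁, g₂₂ : ℂ → ℂ satisfy the primary-Kodaira invariance system for Λ' (at every point of ℂ) if and only if there exist constants c₁₁, c₂₂, c₂₁ ∈ ℂ such that f₁₁ ≡ c₁₁, f₂₂ ≡ c₂₂, f₂₁ ≡ c₂₁, g₂₁ ≡ c₂₂ − c₁₁, and f₁₂ ≡ 0, g₁₁ ≡ 0, g₂₂ ≡ 0, g₁₂ ≡ 0. -/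

import Mathlib

/-!
Each equation of the system, read in the right order, says that one unknown has increment
`conj l * a` under every lattice translation `z ↦ z + l`, with `a` built from unknowns already
known to be constant. Such an entire function has a doubly periodic, hence (Liouville) constant,
derivative, so it is affine, `f z = c z + f 0`; then `conj l * a = c l` on the two periods, and
since conjugation is not `ℂ`-linear this forces `a = 0`. Going down the triangular system this
makes every unknown constant, and the constant increments of `f₁₁`, `f₂₂`, `g₂₁` give a linear
system whose only solution is `f₁₂ = g₁₁ = g₂₂ = 0`.
-/

open Complex ComplexConjugate Function Set Bornology

lemma periodic_deriv_of_sub_eq_const {𝕜 F : Type*} [NontriviallyNormedField 𝕜]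
    [NormedAddCommGroup F] [NormedSpace 𝕜 F] {f : 𝕜 → F} {c : 𝕜} {b : F}
    (h : ∀ x, f (x + c) - f x = b) : Periodic (deriv f) c := by
  intro x
  have hshift : (fun y => f (y + c)) = fun y => f y + b := funext fun y => by
    rw [← h y, add_sub_cancel]
  rw [← deriv_comp_add_const, hshift, deriv_add_const]

lemma eq_smul_add_of_deriv_eq_const {𝕜 E : Type*} [RCLike 𝕜] [NormedAddCommGroup E]
    [NormedSpace 𝕜 E] {f : 𝕜 → E} (hf : Differentiable 𝕜 f) {c : E} (hc : ∀ x, deriv f x = c)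
    (x : 𝕜) : f x = x • c + f 0 := by
  have hg : ∀ y, HasDerivAt (fun y => f y - y • c) 0 y := fun y =>
    ((hf y).hasDerivAt.sub ((hasDerivAt_id' y).smul_const c)).congr_deriv
      (by rw [hc y, one_smul, sub_self])
  have := is_const_of_deriv_eq_zero (fun y => (hg y).differentiableAt) (fun y => (hg y).deriv) x 0
  rw [zero_smul, sub_zero] at this
  rw [← this, add_sub_cancel]

lemma linearIndependent_one_of_im_ne_zero {τ : ℂ} (hτ : τ.im ≠ 0) :
    LinearIndependent ℝ ![1, τ] := by
  refine LinearIndependent.pair_iff.mpr fun s t hst => ?_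
  have ht : t = 0 := by simpa [hτ] using congrArg im hst
  subst ht
  simpa using hst

namespace PeriodPair

variable (L : PeriodPair)

lemma periodic_of_mem_lattice {α : Type*} {f : ℂ → α} (h₁ : Periodic f L.ω₁)
    (h₂ : Periodic f L.ω₂) {l : ℂ} (hl : l ∈ L.lattice) : Periodic f l := by
  obtain ⟨m, n, rfl⟩ := mem_lattice.mp hl
  exact (h₁.int_mul m).add_period (h₂.int_mul n)

lemma isBounded_range_of_periodic {E : Type*} [PseudoMetricSpace E] {f : ℂ → E}
    (hf : Continuous f) (h₁ : Periodic f L.ω₁) (h₂ : Periodic f L.ω₂) :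
    IsBounded (range f) := by
  have hK := (ZSpan.fundamentalDomain_isBounded L.basis).isCompact_closure.image hf
  refine hK.isBounded.subset ?_
  rintro _ ⟨z, rfl⟩
  have hfloor : (ZSpan.floor L.basis z : ℂ) ∈ L.lattice := by
    rw [lattice_eq_span_range_basis]
    exact (ZSpan.floor L.basis z).2
  refine ⟨ZSpan.fract L.basis z, subset_closure (ZSpan.fract_mem_fundamentalDomain _ _), ?_⟩
  exact (L.periodic_of_mem_lattice h₁ h₂ hfloor).sub_eq z

theorem apply_eq_apply_of_periodic {F : Type*} [NormedAddCommGroup F] [NormedSpace ℂ F]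
    {f : ℂ → F} (hf : Differentiable ℂ f) (h₁ : Periodic f L.ω₁) (h₂ : Periodic f L.ω₂)
    (z w : ℂ) : f z = f w :=
  hf.apply_eq_apply_of_bounded (L.isBounded_range_of_periodic hf.continuous h₁ h₂) z w

lemma eq_zero_of_conj_mul_eq_mul {a c : ℂ} (h₁ : conj L.ω₁ * a = L.ω₁ * c)
    (h₂ : conj L.ω₂ * a = L.ω₂ * c) : a = 0 := by
  -- `z ↦ a * conj z` and `z ↦ c * z` are `ℝ`-linear and agree on the basis, hence at `1` and `I`
  have hext : LinearMap.mulLeft ℝ a ∘ₗ conjAe.toLinearMap = LinearMap.mulLeft ℝ c := by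
    refine L.basis.ext fun i => ?_
    fin_cases i
    · simpa [mul_comm] using h₁
    · simpa [mul_comm] using h₂
  have hac : a = c := by simpa using LinearMap.congr_fun hext 1
  have hI : -(a * I) = c * I := by simpa using LinearMap.congr_fun hext I
  have h2aI : a * (2 * I) = 0 := by linear_combination hac * I - hI
  simpa [I_ne_zero] using h2aI

lemma eq_zero_and_const_of_sub_eq_conj_mul {f : ℂ → ℂ} (hf : Differentiable ℂ f) {a : ℂ}
    (h : ∀ l ∈ L.lattice, ∀ z, f (z + l) - f z = conj l * a) : a = 0 ∧ ∀ z, f z = f 0 := by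
  have hderiv : ∀ z, deriv f z = deriv f 0 := fun z =>
    L.apply_eq_apply_of_periodic hf.deriv (periodic_deriv_of_sub_eq_const (h _ L.ω₁_mem_lattice))
      (periodic_deriv_of_sub_eq_const (h _ L.ω₂_mem_lattice)) z 0
  have hincr : ∀ l ∈ L.lattice, conj l * a = l * deriv f 0 := fun l hl => by
    rw [← h l hl 0, zero_add, eq_smul_add_of_deriv_eq_const hf hderiv l, smul_eq_mul,
      add_sub_cancel_right]
  have ha : a = 0 :=
    L.eq_zero_of_conj_mul_eq_mul (hincr _ L.ω₁_mem_lattice) (hincr _ L.ω₂_mem_lattice)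
  refine ⟨ha, fun z => L.apply_eq_apply_of_periodic hf (fun w => ?_) (fun w => ?_) z 0⟩
  · simpa [ha, sub_eq_zero] using h _ L.ω₁_mem_lattice w
  · simpa [ha, sub_eq_zero] using h _ L.ω₂_mem_lattice w

end PeriodPair

def IsPrimaryKodairaInvariant (l : ℂ) (f₁₁ f₁₂ f₂₁ f₂₂ g₁₁ g₁₂ g₂₁ g₂₂ : ℂ → ℂ) : Prop :=
  ∀ z : ℂ,
    (g₁₂ (z + l) - g₁₂ z = 0) ∧
    (g₁₁ (z + l) - g₁₁ z = conj l * g₁₂ z) ∧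
    (g₂₂ (z + l) - g₂₂ z = -conj l * g₁₂ z) ∧
    (g₂₁ (z + l) - g₂₁ z =
      conj l * (g₂₂ z - g₁₁ z) - (conj l) ^ 2 * g₁₂ z) ∧
    (f₁₂ (z + l) - f₁₂ z = -conj l * g₁₂ z) ∧
    (f₁₁ (z + l) - f₁₁ z =
      conj l * f₁₂ z - conj l * g₁₁ z - (conj l) ^ 2 * g₁₂ z) ∧
    (f₂₂ (z + l) - f₂₂ z =
      -conj l * f₁₂ z - conj l * g₂₂ z + (conj l) ^ 2 * g₁₂ z) ∧
    (f₂₁ (z + l) - f₂₁ z =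
      conj l * (f₂₂ z - f₁₁ z - g₂₁ z)
        + (conj l) ^ 2 * (g₂₂ z - g₁₁ z - f₁₂ z) + (conj l) ^ 3 * g₁₂ z)

theorem PeriodPair.exists_const_of_isPrimaryKodairaInvariant (L : PeriodPair)
    {f₁₁ f₁₂ f₂₁ f₂₂ g₁₁ g₁₂ g₂₁ g₂₂ : ℂ → ℂ}
    (hf₁₁ : Differentiable ℂ f₁₁) (hf₁₂ : Differentiable ℂ f₁₂)
    (hf₂₁ : Differentiable ℂ f₂₁) (hf₂₂ : Differentiable ℂ f₂₂)
    (hg₁₁ : Differentiable ℂ g₁₁) (hg₁₂ : Differentiable ℂ g₁₂)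
    (hg₂₁ : Differentiable ℂ g₂₁) (hg₂₂ : Differentiable ℂ g₂₂)
    (H : ∀ l ∈ L.lattice, IsPrimaryKodairaInvariant l f₁₁ f₁₂ f₂₁ f₂₂ g₁₁ g₁₂ g₂₁ g₂₂) :
    ∃ c₁₁ c₂₂ c₂₁ : ℂ,
      (∀ z, f₁₁ z = c₁₁) ∧ (∀ z, f₂₂ z = c₂₂) ∧ (∀ z, f₂₁ z = c₂₁) ∧
      (∀ z, g₂₁ z = c₂₂ - c₁₁) ∧ (∀ z, f₁₂ z = 0) ∧ (∀ z, g₁₁ z = 0) ∧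
      (∀ z, g₂₂ z = 0) ∧ (∀ z, g₁₂ z = 0) := by
  have hg₁₂c := (L.eq_zero_and_const_of_sub_eq_conj_mul hg₁₂ (a := 0) fun l hl z => by
    rw [mul_zero]; exact (H l hl z).1).2
  obtain ⟨hg₁₂0, hg₁₁c⟩ := L.eq_zero_and_const_of_sub_eq_conj_mul hg₁₁ (a := g₁₂ 0)
    fun l hl z => by rw [(H l hl z).2.1, hg₁₂c z]
  have hg₁₂z : ∀ z, g₁₂ z = 0 := fun z => (hg₁₂c z).trans hg₁₂0
  have hg₂₂c := (L.eq_zero_and_const_of_sub_eq_conj_mul hg₂₂ (a := 0) fun l hl z => by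
    rw [(H l hl z).2.2.1, hg₁₂z z, mul_zero, mul_zero]).2
  have hf₁₂c := (L.eq_zero_and_const_of_sub_eq_conj_mul hf₁₂ (a := 0) fun l hl z => by
    rw [(H l hl z).2.2.2.2.1, hg₁₂z z, mul_zero, mul_zero]).2
  obtain ⟨hg₂₁a, hg₂₁c⟩ := L.eq_zero_and_const_of_sub_eq_conj_mul hg₂₁
    (a := g₂₂ 0 - g₁₁ 0) fun l hl z => by
      rw [(H l hl z).2.2.2.1, hg₂₂c z, hg₁₁c z, hg₁₂z z, mul_zero, sub_zero]
  obtain ⟨hf₁₁a, hf₁₁c⟩ := L.eq_zero_and_const_of_sub_eq_conj_mul hf₁₁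
    (a := f₁₂ 0 - g₁₁ 0) fun l hl z => by
      rw [(H l hl z).2.2.2.2.2.1, hf₁₂c z, hg₁₁c z, hg₁₂z z]; ring
  obtain ⟨hf₂₂a, hf₂₂c⟩ := L.eq_zero_and_const_of_sub_eq_conj_mul hf₂₂
    (a := -f₁₂ 0 - g₂₂ 0) fun l hl z => by
      rw [(H l hl z).2.2.2.2.2.2.1, hf₁₂c z, hg₂₂c z, hg₁₂z z]; ring
  have hf₁₂0 : f₁₂ 0 = 0 := by linear_combination (hf₁₁a - hf₂₂a - hg₂₁a) / 2
  have hg₁₁0 : g₁₁ 0 = 0 := by linear_combination hf₁₂0 - hf₁₁a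
  have hg₂₂0 : g₂₂ 0 = 0 := by linear_combination hg₁₁0 + hg₂₁a
  obtain ⟨hf₂₁a, hf₂₁c⟩ := L.eq_zero_and_const_of_sub_eq_conj_mul hf₂₁
    (a := f₂₂ 0 - f₁₁ 0 - g₂₁ 0) fun l hl z => by
      rw [(H l hl z).2.2.2.2.2.2.2, hf₂₂c z, hf₁₁c z, hg₂₁c z, hg₂₂c z, hg₁₁c z, hf₁₂c z,
        hg₁₂z z, hf₁₂0, hg₁₁0, hg₂₂0]; ring
  refine ⟨f₁₁ 0, f₂₂ 0, f₂₁ 0, hf₁₁c, hf₂₂c, hf₂₁c, fun z => ?_, fun z => ?_, fun z => ?_,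
    fun z => ?_, hg₁₂z⟩
  · linear_combination hg₂₁c z - hf₂₁a
  · rw [hf₁₂c z, hf₁₂0]
  · rw [hg₁₁c z, hg₁₁0]
  · rw [hg₂₂c z, hg₂₂0]

/-- Vitter's classification: entire functions satisfy the primary-Kodaira
invariance system for the lattice `Λ' = ℤ + ℤτ'` if and only if they come from
constant flat data with `g₂₁ = f₂₂ − f₁₁` and
`f₁₂ = g₁₁ = g₂₂ = g₁₂ = 0`. -/
theorem stmt_5 (τ' : ℂ) (hτ' : 0 < τ'.im)
    (Λ : Set ℂ) (hΛ : Λ = {z : ℂ | ∃ m n : ℤ, z = (m : ℂ) + (n : ℂ) * τ'})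
    (f₁₁ f₁₂ f₂₁ f₂₂ g₁₁ g₁₂ g₂₁ g₂₂ : ℂ → ℂ)
    (hf₁₁ : Differentiable ℂ f₁₁) (hf₁₂ : Differentiable ℂ f₁₂)
    (hf₂₁ : Differentiable ℂ f₂₁) (hf₂₂ : Differentiable ℂ f₂₂)
    (hg₁₁ : Differentiable ℂ g₁₁) (hg₁₂ : Differentiable ℂ g₁₂)
    (hg₂₁ : Differentiable ℂ g₂₁) (hg₂₂ : Differentiable ℂ g₂₂) :
    (∀ l ∈ Λ, ∀ z : ℂ,
      (g₁₂ (z + l) - g₁₂ z = 0) ∧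
      (g₁₁ (z + l) - g₁₁ z = conj l * g₁₂ z) ∧
      (g₂₂ (z + l) - g₂₂ z = -conj l * g₁₂ z) ∧
      (g₂₁ (z + l) - g₂₁ z =
        conj l * (g₂₂ z - g₁₁ z) - (conj l) ^ 2 * g₁₂ z) ∧
      (f₁₂ (z + l) - f₁₂ z = -conj l * g₁₂ z) ∧
      (f₁₁ (z + l) - f₁₁ z =
        conj l * f₁₂ z - conj l * g₁₁ z - (conj l) ^ 2 * g₁₂ z) ∧
      (f₂₂ (z + l) - f₂₂ z =
        -conj l * f₁₂ z - conj l * g₂₂ z + (conj l) ^ 2 * g₁₂ z) ∧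
      (f₂₁ (z + l) - f₂₁ z =
        conj l * (f₂₂ z - f₁₁ z - g₂₁ z)
          + (conj l) ^ 2 * (g₂₂ z - g₁₁ z - f₁₂ z) + (conj l) ^ 3 * g₁₂ z))
    ↔ ∃ c₁₁ c₂₂ c₂₁ : ℂ,
        (∀ z : ℂ, f₁₁ z = c₁₁) ∧ (∀ z : ℂ, f₂₂ z = c₂₂) ∧
        (∀ z : ℂ, f₂₁ z = c₂₁) ∧ (∀ z : ℂ, g₂₁ z = c₂₂ - c₁₁) ∧
        (∀ z : ℂ, f₁₂ z = 0) ∧ (∀ z : ℂ, g₁₁ z = 0) ∧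
        (∀ z : ℂ, g₂₂ z = 0) ∧ (∀ z : ℂ, g₁₂ z = 0) := by
  let L : PeriodPair := ⟨1, τ', linearIndependent_one_of_im_ne_zero hτ'.ne'⟩
  have hL : ∀ l ∈ L.lattice, l ∈ Λ := fun l hl => by
    obtain ⟨m, n, rfl⟩ := PeriodPair.mem_lattice.mp hl
    rw [hΛ]
    exact ⟨m, n, by simp [L]⟩
  constructor
  · intro H
    exact L.exists_const_of_isPrimaryKodairaInvariant hf₁₁ hf₁₂ hf₂₁ hf₂₂ hg₁₁ hg₁₂ hg₂₁ hg₂₂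
      fun l hl => H l (hL l hl)
  · rintro ⟨c₁₁, c₂₂, c₂₁, h₁₁, h₂₂, h₂₁, hg₂₁c, h₁₂, hg₁₁c, hg₂₂c, hg₁₂c⟩ l - z
    simp only [h₁₁, h₂₂, h₂₁, hg₂₁c, h₁₂, hg₁₁c, hg₂₂c, hg₁₂c]
    refine ⟨?_, ?_, ?_, ?_, ?_, ?_, ?_, ?_⟩ <;> ring
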